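/- arXiv:2006.07769 — 2 statements merged into one kernel-verified Lean document; each statement's English description precedes it below -/
import Mathlib

section
/- Let f satisfy the standing assumptions and let the variance-reduced SGD iterates be generated by x_{k+1} = x_k − α(∇f(x_k) + w_{k,N_k}) with α ∈ (0, 2/(η+L)]. Set q = 1 − 2αηL/(η+L) and suppose the batch sizes are N_k = ⌈ρ₁^{−(k+1)}⌉ with ρ₁ ∈ (q, 1). Then for every k ≥ 1, E[‖x_k − x*‖²] ≤ ρ₁^k · ( E[‖x_0 − x*‖²] + α²ν²/(1 − q/ρ₁) ). -/
/-
For an `η`-strongly convex function with `L`-Lipschitz gradient the gradient is co-coercive in the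
sharp form `‖∇f a - ∇f b‖² + η L ‖a - b‖² ≤ (η + L) ⟪∇f a - ∇f b, a - b⟫`, which makes the exact
gradient step a contraction: `‖a - x* - α ∇f a‖² ≤ q ‖a - x*‖²` whenever `α ≤ 2 / (η + L)`.
The noise is conditionally centred given `F_k`, so the cross term vanishes in expectation and
`e_k = E ‖x_k - x*‖²` obeys `e_{k+1} ≤ q e_k + α² ν² / N_k ≤ q e_k + α² ν² ρ₁^(k+1)`.
Unrolling this recursion with `q < ρ₁` gives the geometric bound.
-/

open MeasureTheory Filter

lemma image_one_le_of_deriv_le {φ φ' : ℝ → ℝ} (hφ : ∀ t, HasDerivAt φ (φ' t) t) {c : ℝ}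
    (hφ' : ∀ t ∈ Set.Ioo (0 : ℝ) 1, φ' t ≤ φ' 0 + c * t) : φ 1 ≤ φ 0 + φ' 0 + c / 2 := by
  set F : ℝ → ℝ := fun t => φ t - t * φ' 0 - c / 2 * t ^ 2
  have hF : ∀ t, HasDerivAt F (φ' t - φ' 0 - c * t) t := fun t =>
    (((hφ t).sub ((hasDerivAt_id' t).mul_const (φ' 0))).sub
      ((hasDerivAt_pow 2 t).const_mul (c / 2))).congr_deriv (by push_cast; ring)
  have hanti : AntitoneOn F (Set.Icc 0 1) := by
    refine antitoneOn_of_deriv_nonpos (convex_Icc 0 1)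
      (fun t _ => (hF t).continuousAt.continuousWithinAt)
      (fun t _ => (hF t).differentiableAt.differentiableWithinAt) fun t ht => ?_
    rw [interior_Icc] at ht
    rw [(hF t).deriv]
    linarith [hφ' t ht]
  have := hanti (Set.left_mem_Icc.2 zero_le_one) (Set.right_mem_Icc.2 zero_le_one) zero_le_one
  simp only [F] at this
  linarith

section InnerProduct

variable {E : Type*} [NormedAddCommGroup E] [InnerProductSpace ℝ E]

open scoped RealInnerProductSpace

lemma norm_sub_sq_le_mul_inner_of_quadratic_bounds (h : E → ℝ) (g : E → E) {M : ℝ} (hM : 0 < M)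
    (hlow : ∀ a b, h a + ⟪g a, b - a⟫ ≤ h b)
    (hup : ∀ a b, h b ≤ h a + ⟪g a, b - a⟫ + M / 2 * ‖b - a‖ ^ 2) (a b : E) :
    ‖g a - g b‖ ^ 2 ≤ M * ⟪g a - g b, a - b⟫ := by
  -- Bregman's inequality, obtained by testing the bounds at `b - M⁻¹ • (g b - g a)`.
  have bregman : ∀ a b, h a + ⟪g a, b - a⟫ + ‖g b - g a‖ ^ 2 / (2 * M) ≤ h b := by
    intro a b
    set Γ := g b - g a
    have hlow' := hlow a (b - M⁻¹ • Γ)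
    have hup' := hup b (b - M⁻¹ • Γ)
    have hΓ : M⁻¹ * ⟪g b, Γ⟫ - M⁻¹ * ⟪g a, Γ⟫ = M⁻¹ * ‖Γ‖ ^ 2 := by
      rw [← mul_sub, ← inner_sub_left, real_inner_self_eq_norm_sq]
    rw [sub_sub_cancel_left, inner_neg_right, norm_neg, real_inner_smul_right, norm_smul,
      mul_pow, Real.norm_eq_abs, sq_abs] at hup'
    rw [sub_right_comm, inner_sub_right, real_inner_smul_right] at hlow'
    have : ‖Γ‖ ^ 2 / (2 * M) = M⁻¹ * ‖Γ‖ ^ 2 - M / 2 * (M⁻¹ ^ 2 * ‖Γ‖ ^ 2) := by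
      field_simp; ring
    linarith
  have hab := bregman a b
  have hba := bregman b a
  rw [norm_sub_rev] at hab
  have hinner : ⟪g a - g b, a - b⟫ = -⟪g a, b - a⟫ - ⟪g b, a - b⟫ := by
    rw [inner_sub_left, ← inner_neg_right, neg_sub]
  rw [hinner, ← div_le_iff₀' hM]
  have : ‖g a - g b‖ ^ 2 / (2 * M) = ‖g a - g b‖ ^ 2 / M / 2 := by rw [div_div, mul_comm]
  linarith

lemma two_mul_mul_mul_div_add_le_one {η L α : ℝ} (hηL : 0 < η + L) (hα : 0 ≤ α)
    (hα' : α ≤ 2 / (η + L)) : 2 * α * η * L / (η + L) ≤ 1 := by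
  have hαs : α * (η + L) ≤ 2 := (le_div_iff₀ hηL).mp hα'
  rw [div_le_one hηL]
  nlinarith [sq_nonneg (η - L)]

lemma norm_sub_smul_sq_le_of_inner_ge {η L α : ℝ} (hηL : 0 < η + L) (hα : 0 ≤ α)
    (hα' : α ≤ 2 / (η + L)) {u g : E} (hug : ‖g‖ ^ 2 + η * L * ‖u‖ ^ 2 ≤ (η + L) * ⟪g, u⟫) :
    ‖u - α • g‖ ^ 2 ≤ (1 - 2 * α * η * L / (η + L)) * ‖u‖ ^ 2 := by
  have hαs : α * (η + L) ≤ 2 := (le_div_iff₀ hηL).mp hα'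
  rw [norm_sub_sq_real, real_inner_smul_right, norm_smul, mul_pow, Real.norm_eq_abs, sq_abs,
    real_inner_comm, ← mul_le_mul_iff_right₀ hηL]
  have : (η + L) * ((1 - 2 * α * η * L / (η + L)) * ‖u‖ ^ 2)
      = ((η + L) - 2 * α * η * L) * ‖u‖ ^ 2 := by field_simp
  rw [this]
  nlinarith [mul_le_mul_of_nonneg_left hug hα, mul_le_mul_of_nonneg_right hαs
    (mul_nonneg hα (sq_nonneg ‖g‖))]

variable [CompleteSpace E] {f : E → ℝ}

lemma hasDerivAt_comp_add_smul (hf : Differentiable ℝ f) (a d : E) (t : ℝ) :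
    HasDerivAt (fun s : ℝ => f (a + s • d)) ⟪gradient f (a + t • d), d⟫ t := by
  have hline : HasDerivAt (fun s : ℝ => a + s • d) d t := by
    simpa using ((hasDerivAt_id t).smul_const d).const_add a
  exact (hasGradientAt_iff_hasFDerivAt.mp (hf _).hasGradientAt).comp_hasDerivAt t hline

lemma le_add_inner_gradient_of_lipschitz (hf : Differentiable ℝ f) {L : ℝ}
    (hlip : ∀ a b, ‖gradient f a - gradient f b‖ ≤ L * ‖a - b‖) (a b : E) :
    f b ≤ f a + ⟪gradient f a, b - a⟫ + L / 2 * ‖b - a‖ ^ 2 := by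
  set d := b - a
  have key := image_one_le_of_deriv_le (c := L * ‖d‖ ^ 2) (hasDerivAt_comp_add_smul hf a d)
    fun t ht => by
      have h1 := real_inner_le_norm (gradient f (a + t • d) - gradient f a) d
      have h2 := hlip (a + t • d) a
      rw [add_sub_cancel_left, norm_smul, Real.norm_of_nonneg ht.1.le] at h2
      rw [inner_sub_left] at h1
      simp only [zero_smul, add_zero]
      nlinarith [norm_nonneg d]
  simpa [d, mul_div_right_comm] using key

lemma add_inner_gradient_le_of_strongMonotone (hf : Differentiable ℝ f) {η : ℝ}
    (hsc : ∀ a b, η * ‖a - b‖ ^ 2 ≤ ⟪gradient f a - gradient f b, a - b⟫) (a b : E) :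
    f a + ⟪gradient f a, b - a⟫ + η / 2 * ‖b - a‖ ^ 2 ≤ f b := by
  set d := b - a
  have key := image_one_le_of_deriv_le (c := -η * ‖d‖ ^ 2) (φ := fun s => -f (a + s • d))
    (fun t => (hasDerivAt_comp_add_smul hf a d t).neg) fun t ht => by
      have h := hsc (a + t • d) a
      rw [add_sub_cancel_left, inner_smul_right, inner_sub_left, norm_smul, mul_pow,
        Real.norm_eq_abs, sq_abs] at h
      simp only [zero_smul, add_zero]
      nlinarith [ht.1]
  simp only [zero_smul, add_zero, one_smul, d, add_sub_cancel] at key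
  linarith

lemma norm_gradient_sub_sq_add_le_mul_inner (hf : Differentiable ℝ f) {η L : ℝ} (hη : 0 ≤ η)
    (hηL : η ≤ L) (hlip : ∀ a b, ‖gradient f a - gradient f b‖ ≤ L * ‖a - b‖)
    (hsc : ∀ a b, η * ‖a - b‖ ^ 2 ≤ ⟪gradient f a - gradient f b, a - b⟫) (a b : E) :
    ‖gradient f a - gradient f b‖ ^ 2 + η * L * ‖a - b‖ ^ 2
      ≤ (η + L) * ⟪gradient f a - gradient f b, a - b⟫ := by
  rcases hηL.eq_or_lt with rfl | hlt
  · have h1 := hsc a b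
    have h2 : ‖gradient f a - gradient f b‖ ^ 2 ≤ (η * ‖a - b‖) ^ 2 :=
      pow_le_pow_left₀ (norm_nonneg _) (hlip a b) 2
    nlinarith
  -- `f - η/2 ‖·‖²` is convex and `(L - η)`-smooth, with gradient `∇f - η • id`.
  have hsq : ∀ u v : E,
      η / 2 * ‖v - u‖ ^ 2 = η / 2 * ‖v‖ ^ 2 - η / 2 * ‖u‖ ^ 2 - η * ⟪u, v - u⟫ := fun u v => by
    rw [norm_sub_sq_real, inner_sub_right, real_inner_self_eq_norm_sq, real_inner_comm]
    ring
  have hshift : ∀ u v : E,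
      ⟪gradient f u - η • u, v - u⟫ = ⟪gradient f u, v - u⟫ - η * ⟪u, v - u⟫ := fun u v => by
    rw [inner_sub_left, real_inner_smul_left]
  have hco := norm_sub_sq_le_mul_inner_of_quadratic_bounds (fun z => f z - η / 2 * ‖z‖ ^ 2)
    (fun z => gradient f z - η • z) (sub_pos.2 hlt)
    (fun u v => by
      have := add_inner_gradient_le_of_strongMonotone hf hsc u v
      simp only [hshift]; linarith [hsq u v])
    (fun u v => by
      have := le_add_inner_gradient_of_lipschitz hf hlip u v
      simp only [hshift]; linarith [hsq u v]) a b
  have hdiff : gradient f a - η • a - (gradient f b - η • b)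
      = (gradient f a - gradient f b) - η • (a - b) := by
    rw [smul_sub]; abel
  set d := gradient f a - gradient f b
  have hnorm : ‖d - η • (a - b)‖ ^ 2 = ‖d‖ ^ 2 - 2 * η * ⟪d, a - b⟫ + η ^ 2 * ‖a - b‖ ^ 2 := by
    rw [norm_sub_sq_real, real_inner_smul_right, norm_smul, mul_pow, Real.norm_eq_abs, sq_abs]
    ring
  have hinner : ⟪d - η • (a - b), a - b⟫ = ⟪d, a - b⟫ - η * ‖a - b‖ ^ 2 := by
    rw [inner_sub_left, real_inner_smul_left, real_inner_self_eq_norm_sq]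
  simp only [hdiff, hnorm, hinner] at hco
  nlinarith

lemma norm_sub_sub_smul_gradient_sq_le (hf : Differentiable ℝ f) {η L α : ℝ} (hη : 0 < η)
    (hηL : η ≤ L) (hlip : ∀ a b, ‖gradient f a - gradient f b‖ ≤ L * ‖a - b‖)
    (hsc : ∀ a b, η * ‖a - b‖ ^ 2 ≤ ⟪gradient f a - gradient f b, a - b⟫) (hα : 0 ≤ α)
    (hα' : α ≤ 2 / (η + L)) {xstar : E} (hxstar : gradient f xstar = 0) (a : E) :
    ‖a - xstar - α • gradient f a‖ ^ 2 ≤ (1 - 2 * α * η * L / (η + L)) * ‖a - xstar‖ ^ 2 := by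
  refine norm_sub_smul_sq_le_of_inner_ge (by linarith) hα hα' ?_
  simpa [hxstar] using norm_gradient_sub_sq_add_le_mul_inner hf hη.le hηL hlip hsc a xstar

end InnerProduct

section Probability

variable {Ω E : Type*} [NormedAddCommGroup E] [InnerProductSpace ℝ E]
  {m m0 : MeasurableSpace Ω} {μ : Measure Ω}

open scoped RealInnerProductSpace

lemma integrable_inner_of_integrable_norm_sq {v w : Ω → E} (hv : AEStronglyMeasurable v μ)
    (hw : AEStronglyMeasurable w μ) (hv2 : Integrable (fun ω => ‖v ω‖ ^ 2) μ)
    (hw2 : Integrable (fun ω => ‖w ω‖ ^ 2) μ) :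
    Integrable (fun ω => ⟪v ω, w ω⟫) μ := by
  refine ((hv2.add hw2).div_const 2).mono' (hv.inner hw) (ae_of_all _ fun ω => ?_)
  have := abs_real_inner_le_norm (v ω) (w ω)
  simp only [Real.norm_eq_abs, Pi.add_apply]
  nlinarith [sq_nonneg (‖v ω‖ - ‖w ω‖)]

variable [CompleteSpace E] [IsFiniteMeasure μ]

lemma integral_inner_eq_zero_of_condExp_eq_zero (hm : m ≤ m0) {v w : Ω → E}
    (hv : StronglyMeasurable[m] v) (hw : Integrable w μ)
    (hvw : Integrable (fun ω => ⟪v ω, w ω⟫) μ) (hw0 : μ[w | m] =ᵐ[μ] 0) :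
    ∫ ω, ⟪v ω, w ω⟫ ∂μ = 0 := by
  calc ∫ ω, ⟪v ω, w ω⟫ ∂μ
      = ∫ ω, (μ[fun ω => ⟪v ω, w ω⟫ | m]) ω ∂μ := (integral_condExp hm).symm
    _ = ∫ ω, ⟪v ω, (μ[w | m]) ω⟫ ∂μ :=
        integral_congr_ae (condExp_bilin_of_stronglyMeasurable_left (innerSL ℝ) hv hvw hw)
    _ = ∫ _ω, (0 : ℝ) ∂μ := integral_congr_ae (hw0.mono fun ω h => by simp [h])
    _ = 0 := integral_zero _ _

lemma integral_norm_sub_smul_sq (hm : m ≤ m0) {v w : Ω → E}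
    (hv : StronglyMeasurable[m] v) (hv2 : Integrable (fun ω => ‖v ω‖ ^ 2) μ)
    (hw : Integrable w μ) (hw2 : Integrable (fun ω => ‖w ω‖ ^ 2) μ)
    (hw0 : μ[w | m] =ᵐ[μ] 0) (α : ℝ) :
    ∫ ω, ‖v ω - α • w ω‖ ^ 2 ∂μ = ∫ ω, ‖v ω‖ ^ 2 ∂μ + α ^ 2 * ∫ ω, ‖w ω‖ ^ 2 ∂μ := by
  have hvw := integrable_inner_of_integrable_norm_sq
    (hv.mono hm).aestronglyMeasurable hw.aestronglyMeasurable hv2 hw2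
  have hexpand : ∀ ω, ‖v ω - α • w ω‖ ^ 2
      = ‖v ω‖ ^ 2 - 2 * α * ⟪v ω, w ω⟫ + α ^ 2 * ‖w ω‖ ^ 2 := fun ω => by
    rw [norm_sub_sq_real, real_inner_smul_right, norm_smul, mul_pow, Real.norm_eq_abs, sq_abs]
    ring
  have hcross : Integrable (fun ω => 2 * α * ⟪v ω, w ω⟫) μ := hvw.const_mul _
  simp_rw [hexpand]
  rw [integral_add (f := fun ω => ‖v ω‖ ^ 2 - 2 * α * ⟪v ω, w ω⟫)
    (hv2.sub hcross) (hw2.const_mul _), integral_sub hv2 hcross,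
    integral_const_mul, integral_const_mul,
    integral_inner_eq_zero_of_condExp_eq_zero hm hv hw hvw hw0]
  ring

lemma integral_le_of_condExp_le_const [IsProbabilityMeasure μ] (hm : m ≤ m0) {X : Ω → ℝ} {c : ℝ}
    (hX : μ[X | m] ≤ᵐ[μ] fun _ => c) : ∫ ω, X ω ∂μ ≤ c := by
  rw [← integral_condExp hm]
  simpa using integral_mono_ae integrable_condExp (integrable_const c) hX

lemma integral_norm_noisy_step_sub_sq_le [IsProbabilityMeasure μ] (hm : m ≤ m0) {G : E → E}
    (hG : Continuous G) {xstar : E} {α q σ : ℝ}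
    (hGq : ∀ a, ‖a - xstar - α • G a‖ ^ 2 ≤ q * ‖a - xstar‖ ^ 2) {X W : Ω → E}
    (hX : StronglyMeasurable[m] X) (hX2 : Integrable (fun ω => ‖X ω - xstar‖ ^ 2) μ)
    (hW : Integrable W μ) (hW2 : Integrable (fun ω => ‖W ω‖ ^ 2) μ) (hW0 : μ[W | m] =ᵐ[μ] 0)
    (hWσ : μ[fun ω => ‖W ω‖ ^ 2 | m] ≤ᵐ[μ] fun _ => σ) :
    ∫ ω, ‖X ω - α • (G (X ω) + W ω) - xstar‖ ^ 2 ∂μ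
      ≤ q * ∫ ω, ‖X ω - xstar‖ ^ 2 ∂μ + α ^ 2 * σ := by
  set v := fun ω => X ω - xstar - α • G (X ω)
  have hv : StronglyMeasurable[m] v :=
    ((continuous_id.sub continuous_const).sub (hG.const_smul α)).comp_stronglyMeasurable hX
  have hv2 : Integrable (fun ω => ‖v ω‖ ^ 2) μ :=
    (hX2.const_mul q).mono' ((hv.mono hm).aestronglyMeasurable.norm.pow 2)
      (ae_of_all _ fun ω => by rw [Real.norm_of_nonneg (sq_nonneg _)]; exact hGq (X ω))
  have hsplit : ∀ ω, X ω - α • (G (X ω) + W ω) - xstar = v ω - α • W ω := fun ω => by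
    simp only [v, smul_add]; abel
  simp_rw [hsplit, integral_norm_sub_smul_sq hm hv hv2 hW hW2 hW0 α]
  gcongr
  · rw [← integral_const_mul]
    exact integral_mono hv2 (hX2.const_mul q) fun ω => hGq (X ω)
  · exact integral_le_of_condExp_le_const hm hWσ

end Probability

lemma div_natCeil_inv_le {r : ℝ} (hr : 0 < r) {c : ℝ} (hc : 0 ≤ c) : c / ⌈r⁻¹⌉₊ ≤ c * r := by
  calc c / ⌈r⁻¹⌉₊ ≤ c / r⁻¹ := div_le_div_of_nonneg_left hc (inv_pos.2 hr) (Nat.le_ceil _)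
    _ = c * r := by rw [div_inv_eq_mul]

lemma le_pow_mul_of_le_mul_add_pow {e : ℕ → ℝ} {q ρ c : ℝ} (hq : 0 ≤ q) (hqρ : q < ρ)
    (hc : 0 ≤ c) (he0 : 0 ≤ e 0) (he : ∀ k, e (k + 1) ≤ q * e k + c * ρ ^ (k + 1)) (k : ℕ) :
    e k ≤ ρ ^ k * (e 0 + c / (1 - q / ρ)) := by
  have hρ : 0 < ρ := hq.trans_lt hqρ
  have hC : c / (1 - q / ρ) = c * ρ / (ρ - q) := by
    rw [one_sub_div hρ.ne', div_div_eq_mul_div]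
  have hCq : (ρ - q) * (c * ρ / (ρ - q)) = c * ρ := mul_div_cancel₀ _ (sub_pos.2 hqρ).ne'
  rw [hC]
  induction k with
  | zero => simpa using div_nonneg (mul_nonneg hc hρ.le) (sub_pos.2 hqρ).le
  | succ n ih =>
    calc e (n + 1) ≤ q * (ρ ^ n * (e 0 + c * ρ / (ρ - q))) + c * ρ ^ (n + 1) :=
          (he n).trans (by gcongr)
      _ = ρ ^ (n + 1) * (e 0 + c * ρ / (ρ - q)) - ρ ^ n * ((ρ - q) * e 0) := by
          rw [pow_succ]; linear_combination (-ρ ^ n) * hCq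
      _ ≤ ρ ^ (n + 1) * (e 0 + c * ρ / (ρ - q)) :=
          sub_le_self _ (mul_nonneg (pow_nonneg hρ.le n) (mul_nonneg (sub_pos.2 hqρ).le he0))

theorem stmt_3_general
    {m : ℕ} {Ω : Type*} {m0 : MeasurableSpace Ω} {μ : Measure Ω}
    [IsProbabilityMeasure μ] (ℱ : Filtration ℕ m0)
    (f : EuclideanSpace ℝ (Fin m) → ℝ) (xstar : EuclideanSpace ℝ (Fin m))
    (x w : ℕ → Ω → EuclideanSpace ℝ (Fin m)) (N : ℕ → ℕ)
    (η L ν α q ρ₁ : ℝ)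
    (hη : 0 < η) (hηL : η ≤ L)
    (hf : ContDiff ℝ 1 f)
    (hlip : ∀ a b, ‖gradient f a - gradient f b‖ ≤ L * ‖a - b‖)
    (hsc : ∀ a b, η * ‖a - b‖ ^ 2 ≤ (inner ℝ (gradient f a - gradient f b) (a - b) : ℝ))
    (hmin : ∀ z, f xstar ≤ f z)
    (hadapted : ∀ k, StronglyMeasurable[ℱ k] (x k))
    (hwint : ∀ k, Integrable (w k) μ)
    (hwsqint : ∀ k, Integrable (fun ω => ‖w k ω‖ ^ 2) μ)
    (hw0 : ∀ k, μ[w k | ℱ k] =ᵐ[μ] 0)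
    (hwvar : ∀ k, μ[fun ω => ‖w k ω‖ ^ 2 | ℱ k] ≤ᵐ[μ] fun _ => ν ^ 2 / N k)
    (hxint : ∀ k, Integrable (fun ω => ‖x k ω - xstar‖ ^ 2) μ)
    (hα : 0 < α) (hα' : α ≤ 2 / (η + L))
    (hq : q = 1 - 2 * α * η * L / (η + L))
    (hρ₁ : ρ₁ ∈ Set.Ioo q 1)
    (hN : ∀ k, N k = ⌈(ρ₁ ^ (k + 1))⁻¹⌉₊)
    (hrec : ∀ k ω, x (k + 1) ω = x k ω - α • (gradient f (x k ω) + w k ω)) :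
    ∀ k, 1 ≤ k →
      ∫ ω, ‖x k ω - xstar‖ ^ 2 ∂μ ≤
        ρ₁ ^ k * ((∫ ω, ‖x 0 ω - xstar‖ ^ 2 ∂μ) + α ^ 2 * ν ^ 2 / (1 - q / ρ₁)) := by
  have hq0 : 0 ≤ q := hq ▸ sub_nonneg.2 (two_mul_mul_mul_div_add_le_one (by linarith) hα.le hα')
  have hρ : 0 < ρ₁ := hq0.trans_lt hρ₁.1
  have hgrad : Continuous (gradient f) :=
    (InnerProductSpace.toDual ℝ _).symm.continuous.comp (hf.continuous_fderiv one_ne_zero)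
  have hxstar : gradient f xstar = 0 := by
    simp [gradient, IsLocalMin.fderiv_eq_zero (Eventually.of_forall hmin : IsLocalMin f xstar)]
  have hcontract : ∀ a, ‖a - xstar - α • gradient f a‖ ^ 2 ≤ q * ‖a - xstar‖ ^ 2 := hq ▸
    norm_sub_sub_smul_gradient_sq_le (hf.differentiable one_ne_zero) hη hηL hlip hsc hα.le hα'
      hxstar
  have hstep : ∀ k, ∫ ω, ‖x (k + 1) ω - xstar‖ ^ 2 ∂μ
      ≤ q * ∫ ω, ‖x k ω - xstar‖ ^ 2 ∂μ + α ^ 2 * ν ^ 2 * ρ₁ ^ (k + 1) := fun k => by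
    simp_rw [hrec, mul_assoc (α ^ 2)]
    refine (integral_norm_noisy_step_sub_sq_le (ℱ.le k) hgrad hcontract (hadapted k) (hxint k)
      (hwint k) (hwsqint k) (hw0 k) (hwvar k)).trans ?_
    gcongr
    exact hN k ▸ div_natCeil_inv_le (pow_pos hρ _) (sq_nonneg ν)
  exact fun k _ => le_pow_mul_of_le_mul_add_pow (e := fun k => ∫ ω, ‖x k ω - xstar‖ ^ 2 ∂μ)
    hq0 hρ₁.1 (by positivity) (integral_nonneg fun ω => sq_nonneg _) hstep k

/-- **Proposition 1 (geometric rate for variance-reduced SGD with geometric batch sizes).** -/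
theorem stmt_3
    {m : ℕ} {Ω : Type*} {m0 : MeasurableSpace Ω} {μ : Measure Ω}
    [IsProbabilityMeasure μ] (ℱ : Filtration ℕ m0)
    (f : EuclideanSpace ℝ (Fin m) → ℝ) (xstar : EuclideanSpace ℝ (Fin m))
    (x w : ℕ → Ω → EuclideanSpace ℝ (Fin m)) (N : ℕ → ℕ)
    (η L ν α q ρ₁ : ℝ)
    (hη : 0 < η) (hηL : η ≤ L) (hν : 0 < ν)
    (hf : ContDiff ℝ 1 f)
    (hlip : ∀ a b, ‖gradient f a - gradient f b‖ ≤ L * ‖a - b‖)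
    (hsc : ∀ a b, η * ‖a - b‖ ^ 2 ≤ (inner ℝ (gradient f a - gradient f b) (a - b) : ℝ))
    (hmin : ∀ z, f xstar ≤ f z)
    (hadapted : ∀ k, StronglyMeasurable[ℱ k] (x k))
    (hwint : ∀ k, Integrable (w k) μ)
    (hwsqint : ∀ k, Integrable (fun ω => ‖w k ω‖ ^ 2) μ)
    (hw0 : ∀ k, μ[w k | ℱ k] =ᵐ[μ] 0)
    (hwvar : ∀ k, μ[fun ω => ‖w k ω‖ ^ 2 | ℱ k] ≤ᵐ[μ] fun _ => ν ^ 2 / N k)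
    (hxint : ∀ k, Integrable (fun ω => ‖x k ω - xstar‖ ^ 2) μ)
    (hα : 0 < α) (hα' : α ≤ 2 / (η + L))
    (hq : q = 1 - 2 * α * η * L / (η + L))
    (hρ₁ : ρ₁ ∈ Set.Ioo q 1)
    (hN : ∀ k, N k = ⌈(ρ₁ ^ (k + 1))⁻¹⌉₊)
    (hrec : ∀ k ω, x (k + 1) ω = x k ω - α • (gradient f (x k ω) + w k ω)) :
    ∀ k, 1 ≤ k →
      ∫ ω, ‖x k ω - xstar‖ ^ 2 ∂μ ≤
        ρ₁ ^ k * ((∫ ω, ‖x 0 ω - xstar‖ ^ 2 ∂μ) + α ^ 2 * ν ^ 2 / (1 - q / ρ₁)) :=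
  stmt_3_general ℱ f xstar x w N η L ν α q ρ₁ hη hηL hf hlip hsc hmin hadapted hwint hwsqint hw0
    hwvar hxint hα hα' hq hρ₁ hN hrec
end

section
/- Let f satisfy the standing assumptions and let the variance-reduced accelerated SGD iterates be generated by y_{k+1} = x_k − α(∇f(x_k) + w_{k,N_k}) and x_{k+1} = y_{k+1} + β(y_{k+1} − y_k) with x_0 = y_0, α ∈ (0, 1/L], γ = √(αη), β = (1−γ)/(1+γ), and polynomially increasing batch sizes N_k = ⌈(k+1)^v⌉ for some v > 0. Then there exists a constant C(v) > 0 such that E[f(y_k)] − f* ≤ C(v) · k^{−v} for all k ≥ 1. -/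
open MeasureTheory Filter Real
open scoped Topology InnerProductSpace

/-!
Set `z = x + γ⁻¹ (x - y)` and `V(x, y) = f y - f x* + η/2 ‖z - x*‖²`. The momentum
coefficient `β = (1 - γ)/(1 + γ)` is exactly what makes `z` move by the convex step
`z⁺ = (1 - γ) z + γ x - (α/γ) (∇f x + w)`; combining the descent inequality with the lower
quadratic bounds at `y` and at `x*` (weighted by `1 - γ` and `γ`) then gives
`V(x⁺, y⁺) ≤ (1 - γ) V(x, y) + α ‖w‖² + ⟪H, w⟫` with `H` measurable with respect to `ℱ k`.
The cross term has mean zero, so `E V_{k+1} ≤ (1 - γ) E V_k + α ν² (k + 1)^{-v}`; a recursion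
contracting at a fixed rate and forced by `(k + 1)^{-v}` decays like `(k + 1)^{-v}`, and
`f y - f x* ≤ V`.
-/

section SmoothStronglyConvex

variable {E : Type*} [NormedAddCommGroup E] [InnerProductSpace ℝ E] [CompleteSpace E] {f : E → ℝ}

theorem ContDiff.continuous_gradient (hf : ContDiff ℝ 1 f) : Continuous (gradient f) :=
  (InnerProductSpace.toDual ℝ E).symm.continuous.comp (hf.continuous_fderiv one_ne_zero)

theorem ContDiff.sub_sub_inner_gradient_eq_integral (hf : ContDiff ℝ 1 f) (a d : E) :
    f (a + d) - f a - ⟪gradient f a, d⟫_ℝ =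
      ∫ t in (0 : ℝ)..1, ⟪gradient f (a + t • d) - gradient f a, d⟫_ℝ := by
  have hderiv (t : ℝ) :
      HasDerivAt (fun s : ℝ => f (a + s • d)) ⟪gradient f (a + t • d), d⟫_ℝ t := by
    have hpath : HasDerivAt (fun s : ℝ => a + s • d) d t := by
      simpa using ((hasDerivAt_id t).smul_const d).const_add a
    rw [inner_gradient_left]
    exact ((hf.differentiable one_ne_zero) _).hasFDerivAt.comp_hasDerivAt t hpath
  have hcont : Continuous fun t : ℝ => ⟪gradient f (a + t • d), d⟫_ℝ := by
    have := hf.continuous_gradient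
    fun_prop
  simp only [inner_sub_left]
  rw [intervalIntegral.integral_sub (hcont.intervalIntegrable 0 1) intervalIntegrable_const,
    intervalIntegral.integral_eq_sub_of_hasDerivAt (fun t _ => hderiv t)
      (hcont.intervalIntegrable 0 1)]
  simp

theorem le_add_inner_gradient_add_of_lipschitz_gradient {L : ℝ} (hf : ContDiff ℝ 1 f)
    (hlip : ∀ a b, ‖gradient f a - gradient f b‖ ≤ L * ‖a - b‖) (a b : E) :
    f b ≤ f a + ⟪gradient f a, b - a⟫_ℝ + L / 2 * ‖b - a‖ ^ 2 := by
  have hftc := hf.sub_sub_inner_gradient_eq_integral a (b - a)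
  rw [add_sub_cancel] at hftc
  have hcont : Continuous fun t : ℝ => ⟪gradient f (a + t • (b - a)) - gradient f a, b - a⟫_ℝ := by
    have := hf.continuous_gradient
    fun_prop
  have hint : ∫ t in (0 : ℝ)..1, ⟪gradient f (a + t • (b - a)) - gradient f a, b - a⟫_ℝ ≤
      ∫ t in (0 : ℝ)..1, L * ‖b - a‖ ^ 2 * t := by
    refine intervalIntegral.integral_mono_on zero_le_one (hcont.intervalIntegrable 0 1)
      ((by fun_prop : Continuous fun t : ℝ => L * ‖b - a‖ ^ 2 * t).intervalIntegrable 0 1) ?_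
    intro t ht
    calc _ ≤ ‖gradient f (a + t • (b - a)) - gradient f a‖ * ‖b - a‖ := real_inner_le_norm _ _
      _ ≤ L * ‖t • (b - a)‖ * ‖b - a‖ := by
          gcongr; simpa using hlip (a + t • (b - a)) a
      _ = _ := by rw [norm_smul, norm_of_nonneg ht.1]; ring
  rw [intervalIntegral.integral_const_mul, integral_id] at hint
  linarith

theorem add_inner_gradient_add_le_of_strongly_monotone_gradient {η : ℝ} (hf : ContDiff ℝ 1 f)
    (hsc : ∀ a b, η * ‖a - b‖ ^ 2 ≤ ⟪gradient f a - gradient f b, a - b⟫_ℝ) (a b : E) :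
    f a + ⟪gradient f a, b - a⟫_ℝ + η / 2 * ‖b - a‖ ^ 2 ≤ f b := by
  have hftc := hf.sub_sub_inner_gradient_eq_integral a (b - a)
  rw [add_sub_cancel] at hftc
  have hcont : Continuous fun t : ℝ => ⟪gradient f (a + t • (b - a)) - gradient f a, b - a⟫_ℝ := by
    have := hf.continuous_gradient
    fun_prop
  have hint : ∫ t in (0 : ℝ)..1, η * ‖b - a‖ ^ 2 * t ≤
      ∫ t in (0 : ℝ)..1, ⟪gradient f (a + t • (b - a)) - gradient f a, b - a⟫_ℝ := by
    refine intervalIntegral.integral_mono_on zero_le_one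
      ((by fun_prop : Continuous fun t : ℝ => η * ‖b - a‖ ^ 2 * t).intervalIntegrable 0 1)
      (hcont.intervalIntegrable 0 1) ?_
    intro t ht
    rcases ht.1.eq_or_lt with rfl | ht0
    · simp
    have h := hsc (a + t • (b - a)) a
    rw [add_sub_cancel_left, inner_smul_right, norm_smul, norm_of_nonneg ht.1] at h
    nlinarith
  rw [intervalIntegral.integral_const_mul, integral_id] at hint
  linarith

theorem gradient_step_le {L α : ℝ}
    (hup : ∀ a b, f b ≤ f a + ⟪gradient f a, b - a⟫_ℝ + L / 2 * ‖b - a‖ ^ 2)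
    (hα : 0 ≤ α) (hαL : L * α ≤ 1) (x g : E) :
    f (x - α • g) ≤ f x - α * ⟪gradient f x, g⟫_ℝ + α / 2 * ‖g‖ ^ 2 := by
  have h := hup x (x - α • g)
  rw [sub_sub_cancel_left, inner_neg_right, inner_smul_right, norm_neg, norm_smul,
    norm_of_nonneg hα] at h
  nlinarith [mul_le_mul_of_nonneg_right hαL (by positivity : 0 ≤ α * ‖g‖ ^ 2)]

end SmoothStronglyConvex

section CondExp

variable {Ω E : Type*} {m m0 : MeasurableSpace Ω} {μ : Measure Ω}
  [NormedAddCommGroup E] [InnerProductSpace ℝ E] [CompleteSpace E]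

theorem integral_inner_eq_zero_of_condExp_eq_zero_s13 (hm : m ≤ m0) [SigmaFinite (μ.trim hm)]
    {h e : Ω → E} (hh : StronglyMeasurable[m] h) (hhe : Integrable (fun ω => ⟪h ω, e ω⟫_ℝ) μ)
    (he : Integrable e μ) (he0 : μ[e | m] =ᵐ[μ] 0) :
    ∫ ω, ⟪h ω, e ω⟫_ℝ ∂μ = 0 := by
  have hpull : μ[fun ω => ⟪h ω, e ω⟫_ℝ | m] =ᵐ[μ] fun ω => ⟪h ω, μ[e | m] ω⟫_ℝ :=
    condExp_bilin_of_stronglyMeasurable_left (innerSL ℝ) hh hhe he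
  rw [← integral_condExp hm, integral_congr_ae hpull]
  refine integral_eq_zero_of_ae ?_
  filter_upwards [he0] with ω hω
  simp [hω]

theorem integral_le_of_condExp_le [IsProbabilityMeasure μ] (hm : m ≤ m0) {g : Ω → ℝ} {c : ℝ}
    (hg : μ[g | m] ≤ᵐ[μ] fun _ => c) : ∫ ω, g ω ∂μ ≤ c := by
  rw [← integral_condExp hm]
  simpa using integral_mono_ae integrable_condExp (integrable_const c) hg

end CondExp

section ContractionWithPolynomialForcing

theorem eventually_mul_rpow_neg_le {c : ℝ} (hc : c < 1) (v : ℝ) :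
    ∀ᶠ k : ℕ in atTop, c * ((k : ℝ) + 1) ^ (-v) ≤ (((k + 1 : ℕ) : ℝ) + 1) ^ (-v) := by
  have hlim : Tendsto (fun k : ℕ => (((k + 1 : ℕ) : ℝ) / (((k + 1 : ℕ) : ℝ) + 1)) ^ v) atTop
      (𝓝 1) := by
    simpa using ((tendsto_natCast_div_add_atTop (1 : ℝ)).comp
      (tendsto_add_atTop_nat 1)).rpow_const (Or.inl one_ne_zero)
  filter_upwards [hlim.eventually (eventually_gt_nhds hc)] with k hk
  calc c * ((k : ℝ) + 1) ^ (-v)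
      ≤ (((k + 1 : ℕ) : ℝ) / (((k + 1 : ℕ) : ℝ) + 1)) ^ v * ((k : ℝ) + 1) ^ (-v) := by gcongr
    _ = _ := by
      push_cast
      rw [div_rpow (by positivity) (by positivity), rpow_neg (by positivity),
        rpow_neg (by positivity)]
      field_simp

theorem exists_le_mul_rpow_neg_of_le_contraction {a : ℕ → ℝ} {γ B v : ℝ} (hγ0 : 0 < γ)
    (hγ1 : γ ≤ 1) (ha : ∀ k, a (k + 1) ≤ (1 - γ) * a k + B * ((k : ℝ) + 1) ^ (-v)) :
    ∃ C > 0, ∀ k, a k ≤ C * ((k : ℝ) + 1) ^ (-v) := by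
  -- Past `k₀`, `C (k + 1)^{-v}` is a supersolution of the recursion as soon as `B ≤ γ C / 2`.
  obtain ⟨k₀, hk₀⟩ :=
    eventually_atTop.1 (eventually_mul_rpow_neg_le (by linarith : 1 - γ / 2 < 1) v)
  obtain ⟨D, hD⟩ : BddAbove ((fun j : ℕ => a j * ((j : ℝ) + 1) ^ v) '' Set.Iic k₀) :=
    ((Set.finite_Iic k₀).image _).bddAbove
  set C := max (max D (2 * B / γ)) 1
  have hCD : D ≤ C := (le_max_left _ _).trans (le_max_left _ _)
  have hCB : B ≤ γ / 2 * C := by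
    have := (le_max_right D (2 * B / γ)).trans (le_max_left _ 1)
    rw [div_le_iff₀ hγ0] at this
    linarith
  have hsmall : ∀ j ≤ k₀, a j ≤ C * ((j : ℝ) + 1) ^ (-v) := by
    intro j hj
    have := hD ⟨j, hj, rfl⟩
    rw [rpow_neg (by positivity), ← div_eq_mul_inv, le_div_iff₀ (by positivity)]
    linarith
  refine ⟨C, lt_max_of_lt_right one_pos, fun k => ?_⟩
  rcases le_total k k₀ with hk | hk
  · exact hsmall k hk
  induction k, hk using Nat.le_induction with
  | base => exact hsmall k₀ le_rfl
  | succ k hk ih =>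
    calc a (k + 1) ≤ (1 - γ) * a k + B * ((k : ℝ) + 1) ^ (-v) := ha k
      _ ≤ (1 - γ) * (C * ((k : ℝ) + 1) ^ (-v)) + γ / 2 * C * ((k : ℝ) + 1) ^ (-v) := by
          gcongr
      _ = C * ((1 - γ / 2) * ((k : ℝ) + 1) ^ (-v)) := by ring
      _ ≤ C * (((k + 1 : ℕ) : ℝ) + 1) ^ (-v) := by
          gcongr
          exact hk₀ k hk

end ContractionWithPolynomialForcing

theorem sq_norm_smul_add_smul_le {E : Type*} [SeminormedAddCommGroup E] [NormedSpace ℝ E] {γ : ℝ}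
    (hγ0 : 0 ≤ γ) (hγ1 : γ ≤ 1) (u p : E) :
    ‖(1 - γ) • u + γ • p‖ ^ 2 ≤ (1 - γ) * ‖u‖ ^ 2 + γ * ‖p‖ ^ 2 := by
  simpa using (convexOn_univ_norm.pow (fun _ _ => norm_nonneg _) 2).2 (Set.mem_univ u)
    (Set.mem_univ p) (by linarith) hγ0 (by ring)

theorem memLp_two_sub_of_quadratic_growth {Ω E : Type*} {m0 : MeasurableSpace Ω}
    {μ : Measure Ω} [IsFiniteMeasure μ] [NormedAddCommGroup E] {f : E → ℝ} {xstar : E} {η : ℝ}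
    (hη : 0 < η) (hqg : ∀ u, η / 2 * ‖u - xstar‖ ^ 2 ≤ f u - f xstar) {Y : Ω → E}
    (hY : AEStronglyMeasurable Y μ) (hfY : Integrable (fun ω => f (Y ω)) μ) :
    MemLp (fun ω => Y ω - xstar) 2 μ := by
  refine (memLp_two_iff_integrable_sq_norm (hY.sub aestronglyMeasurable_const)).2 ?_
  refine ((hfY.sub (integrable_const (f xstar))).const_mul (2 / η)).mono'
    ((hY.sub aestronglyMeasurable_const).norm.pow 2) (ae_of_all _ fun ω => ?_)
  have := hqg (Y ω)
  simp only [norm_pow, norm_norm, Pi.sub_apply]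
  rw [div_mul_eq_mul_div, le_div_iff₀ hη]
  linarith

namespace AcceleratedSGD

noncomputable section

variable {E : Type*} [NormedAddCommGroup E] [InnerProductSpace ℝ E]

def estimatePoint (γ : ℝ) (x y : E) : E := x + γ⁻¹ • (x - y)

def lyapunov (f : E → ℝ) (xstar : E) (η γ : ℝ) (x y : E) : ℝ :=
  f y - f xstar + η / 2 * ‖estimatePoint γ x y - xstar‖ ^ 2

def noiseCoupling [CompleteSpace E] (f : E → ℝ) (xstar : E) (α γ : ℝ) (x y : E) : E :=
  α • gradient f x - γ • ((1 - γ) • (estimatePoint γ x y - xstar) + γ • (x - xstar))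

theorem estimatePoint_momentum_step {α β γ : ℝ} (hγ0 : 0 < γ) (hβ : β = (1 - γ) / (1 + γ))
    {x y g x' y' : E} (hy' : y' = x - α • g) (hx' : x' = y' + β • (y' - y)) :
    estimatePoint γ x' y' = (1 - γ) • estimatePoint γ x y + γ • x - (α / γ) • g := by
  have : 1 + γ ≠ 0 := by positivity
  subst hx' hy' hβ
  simp only [estimatePoint]
  match_scalars <;> field_simp <;> ring

theorem sub_le_lyapunov {f : E → ℝ} {xstar : E} {η : ℝ} (hη : 0 ≤ η) (γ : ℝ) (x y : E) :
    f y - f xstar ≤ lyapunov f xstar η γ x y :=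
  le_add_of_nonneg_right (by positivity)

theorem half_mul_sq_norm_sub_div_smul {α γ η : ℝ} (hγ : γ ≠ 0) (hαη : α * η = γ ^ 2) (W g : E) :
    η / 2 * ‖W - (α / γ) • g‖ ^ 2 = η / 2 * ‖W‖ ^ 2 - γ * ⟪W, g⟫_ℝ + α / 2 * ‖g‖ ^ 2 := by
  rw [norm_sub_sq_real, inner_smul_right, norm_smul, Real.norm_eq_abs, mul_pow, sq_abs]
  field_simp
  linear_combination (α * ‖g‖ ^ 2 - 2 * γ * ⟪W, g⟫_ℝ) * hαη

theorem lyapunov_succ_le [CompleteSpace E] {f : E → ℝ} {xstar : E} {α β γ η L : ℝ}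
    (hup : ∀ a b, f b ≤ f a + ⟪gradient f a, b - a⟫_ℝ + L / 2 * ‖b - a‖ ^ 2)
    (hlo : ∀ a b, f a + ⟪gradient f a, b - a⟫_ℝ + η / 2 * ‖b - a‖ ^ 2 ≤ f b)
    (hα : 0 < α) (hαL : L * α ≤ 1) (hγ0 : 0 < γ) (hγ1 : γ ≤ 1) (hαη : α * η = γ ^ 2)
    (hβ : β = (1 - γ) / (1 + γ)) {x y e x' y' : E}
    (hy' : y' = x - α • (gradient f x + e)) (hx' : x' = y' + β • (y' - y)) :
    lyapunov f xstar η γ x' y' ≤ (1 - γ) * lyapunov f xstar η γ x y + α * ‖e‖ ^ 2 +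
      ⟪noiseCoupling f xstar α γ x y, e⟫_ℝ := by
  simp only [lyapunov, noiseCoupling]
  set G := gradient f x
  set z := estimatePoint γ x y
  set W := (1 - γ) • (z - xstar) + γ • (x - xstar)
  have hη : 0 ≤ η := by nlinarith [sq_nonneg γ]
  have hz' : estimatePoint γ x' y' - xstar = W - (α / γ) • (G + e) := by
    rw [estimatePoint_momentum_step hγ0 hβ hy' hx']
    module
  have hγW : γ • W = γ • (x - xstar) + (1 - γ) • (x - y) := by
    simp only [W, z, estimatePoint]
    match_scalars <;> field_simp <;> ring
  have hdescent : f y' ≤ f x - α * ⟪G, G + e⟫_ℝ + α / 2 * ‖G + e‖ ^ 2 :=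
    hy' ▸ gradient_step_le hup hα.le hαL x (G + e)
  have hWG : γ * ⟪W, G⟫_ℝ = γ * ⟪x - xstar, G⟫_ℝ + (1 - γ) * ⟪x - y, G⟫_ℝ := by
    rw [← real_inner_smul_left, ← real_inner_smul_left, ← real_inner_smul_left, ← inner_add_left,
      hγW]
  have hconvex : η / 2 * ‖W‖ ^ 2 ≤ η / 2 * ((1 - γ) * ‖z - xstar‖ ^ 2 + γ * ‖x - xstar‖ ^ 2) :=
    mul_le_mul_of_nonneg_left (sq_norm_smul_add_smul_le hγ0.le hγ1 _ _) (by positivity)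
  have hlo_y : (1 - γ) * (f x - ⟪x - y, G⟫_ℝ) ≤ (1 - γ) * f y := by
    refine mul_le_mul_of_nonneg_left ?_ (by linarith)
    have h := hlo x y
    rw [← neg_sub x y, inner_neg_right, real_inner_comm] at h
    nlinarith [sq_nonneg ‖-(x - y)‖]
  have hlo_xstar : γ * (f x - ⟪x - xstar, G⟫_ℝ + η / 2 * ‖x - xstar‖ ^ 2) ≤ γ * f xstar := by
    refine mul_le_mul_of_nonneg_left ?_ hγ0.le
    have h := hlo x xstar
    rwa [← neg_sub x xstar, inner_neg_right, real_inner_comm, norm_neg, ← sub_eq_add_neg] at h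
  rw [hz', half_mul_sq_norm_sub_div_smul hγ0.ne' hαη]
  simp only [inner_add_right, inner_sub_left, inner_smul_left, RCLike.conj_to_real,
    real_inner_self_eq_norm_sq, norm_add_sq_real] at hdescent ⊢
  linarith

section Stochastic

variable {Ω : Type*} {m m0 : MeasurableSpace Ω} {μ : Measure Ω}
  {f : E → ℝ} {xstar : E}

theorem memLp_two_estimatePoint_sub {γ : ℝ} {X Y : Ω → E}
    (hX : MemLp (fun ω => X ω - xstar) 2 μ) (hY : MemLp (fun ω => Y ω - xstar) 2 μ) :
    MemLp (fun ω => estimatePoint γ (X ω) (Y ω) - xstar) 2 μ := by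
  convert hX.add ((hX.sub hY).const_smul γ⁻¹) using 1
  ext ω
  simp only [estimatePoint, Pi.add_apply, Pi.sub_apply, Pi.smul_apply]
  module

theorem integrable_lyapunov [IsFiniteMeasure μ] {η γ : ℝ} (hη : 0 < η)
    (hqg : ∀ u, η / 2 * ‖u - xstar‖ ^ 2 ≤ f u - f xstar) {X Y : Ω → E}
    (hX : MemLp (fun ω => X ω - xstar) 2 μ) (hY : AEStronglyMeasurable Y μ)
    (hfY : Integrable (fun ω => f (Y ω)) μ) :
    Integrable (fun ω => lyapunov f xstar η γ (X ω) (Y ω)) μ :=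
  (hfY.sub (integrable_const _)).add <| ((memLp_two_estimatePoint_sub hX
    (memLp_two_sub_of_quadratic_growth hη hqg hY hfY)).integrable_norm_pow two_ne_zero).const_mul _

theorem integral_lyapunov_succ_le [CompleteSpace E] [IsProbabilityMeasure μ] (hm : m ≤ m0)
    {α β γ η L c : ℝ} (hgc : Continuous (gradient f))
    (hup : ∀ a b, f b ≤ f a + ⟪gradient f a, b - a⟫_ℝ + L / 2 * ‖b - a‖ ^ 2)
    (hlo : ∀ a b, f a + ⟪gradient f a, b - a⟫_ℝ + η / 2 * ‖b - a‖ ^ 2 ≤ f b)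
    (hqg : ∀ u, η / 2 * ‖u - xstar‖ ^ 2 ≤ f u - f xstar)
    (hgrad : ∀ u, ‖gradient f u‖ ≤ L * ‖u - xstar‖)
    (hη : 0 < η) (hα : 0 < α) (hαL : L * α ≤ 1) (hγ0 : 0 < γ) (hγ1 : γ ≤ 1)
    (hαη : α * η = γ ^ 2) (hβ : β = (1 - γ) / (1 + γ)) {X Y e X' Y' : Ω → E}
    (hX : StronglyMeasurable[m] X) (hY : StronglyMeasurable[m] Y)
    (hX2 : MemLp (fun ω => X ω - xstar) 2 μ) (hfY : Integrable (fun ω => f (Y ω)) μ)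
    (hX'2 : MemLp (fun ω => X' ω - xstar) 2 μ) (hY' : AEStronglyMeasurable Y' μ)
    (hfY' : Integrable (fun ω => f (Y' ω)) μ)
    (he : MemLp e 2 μ) (he0 : μ[e | m] =ᵐ[μ] 0)
    (hevar : μ[fun ω => ‖e ω‖ ^ 2 | m] ≤ᵐ[μ] fun _ => c)
    (hY'_eq : ∀ ω, Y' ω = X ω - α • (gradient f (X ω) + e ω))
    (hX'_eq : ∀ ω, X' ω = Y' ω + β • (Y' ω - Y ω)) :
    ∫ ω, lyapunov f xstar η γ (X' ω) (Y' ω) ∂μ ≤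
      (1 - γ) * ∫ ω, lyapunov f xstar η γ (X ω) (Y ω) ∂μ + α * c := by
  set H := fun ω => noiseCoupling f xstar α γ (X ω) (Y ω)
  have hY2 := memLp_two_sub_of_quadratic_growth hη hqg (hY.mono hm).aestronglyMeasurable hfY
  have hG2 : MemLp (fun ω => gradient f (X ω)) 2 μ :=
    hX2.of_le_mul (hgc.comp_stronglyMeasurable (hX.mono hm)).aestronglyMeasurable
      (ae_of_all _ fun ω => hgrad (X ω))
  have hH2 : MemLp H 2 μ :=
    (hG2.const_smul α).sub ((((memLp_two_estimatePoint_sub (γ := γ) hX2 hY2).const_smul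
      (1 - γ)).add (hX2.const_smul γ)).const_smul γ)
  have hHm : StronglyMeasurable[m] H := by
    have hZ : StronglyMeasurable[m] fun ω => estimatePoint γ (X ω) (Y ω) :=
      hX.add ((hX.sub hY).const_smul γ⁻¹)
    exact ((hgc.comp_stronglyMeasurable hX).const_smul α).sub
      ((((hZ.sub stronglyMeasurable_const).const_smul (1 - γ)).add
        ((hX.sub stronglyMeasurable_const).const_smul γ)).const_smul γ)
  have hHe : Integrable (fun ω => ⟪H ω, e ω⟫_ℝ) μ :=
    memLp_one_iff_integrable.1 ((innerSL ℝ).memLp_of_bilin 1 hH2 he)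
  have hV := integrable_lyapunov (γ := γ) hη hqg hX2 (hY.mono hm).aestronglyMeasurable hfY
  have he2 : Integrable (fun ω => ‖e ω‖ ^ 2) μ := he.integrable_norm_pow two_ne_zero
  calc ∫ ω, lyapunov f xstar η γ (X' ω) (Y' ω) ∂μ
      ≤ ∫ ω, ((1 - γ) * lyapunov f xstar η γ (X ω) (Y ω) + α * ‖e ω‖ ^ 2 + ⟪H ω, e ω⟫_ℝ) ∂μ :=
        integral_mono (integrable_lyapunov hη hqg hX'2 hY' hfY')
          (((hV.const_mul _).add (he2.const_mul _)).add hHe)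
          fun ω => lyapunov_succ_le hup hlo hα hαL hγ0 hγ1 hαη hβ (hY'_eq ω) (hX'_eq ω)
    _ = (1 - γ) * ∫ ω, lyapunov f xstar η γ (X ω) (Y ω) ∂μ + α * ∫ ω, ‖e ω‖ ^ 2 ∂μ := by
        rw [integral_add _ hHe, integral_add (hV.const_mul _) (he2.const_mul _),
          integral_const_mul, integral_const_mul,
          integral_inner_eq_zero_of_condExp_eq_zero_s13 hm hHm hHe (he.integrable one_le_two) he0,
          add_zero]
        exact (hV.const_mul _).add (he2.const_mul _)
    _ ≤ _ := by
        gcongr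
        exact integral_le_of_condExp_le hm hevar

end Stochastic

end

end AcceleratedSGD

theorem stmt_13_general
    {m : ℕ} {Ω : Type*} {m0 : MeasurableSpace Ω} {μ : Measure Ω}
    [IsProbabilityMeasure μ] (ℱ : Filtration ℕ m0)
    (f : EuclideanSpace ℝ (Fin m) → ℝ) (xstar : EuclideanSpace ℝ (Fin m))
    (x y w : ℕ → Ω → EuclideanSpace ℝ (Fin m)) (N : ℕ → ℕ)
    (η L ν α β γ v : ℝ)
    (hη : 0 < η) (hηL : η ≤ L) (hv : 0 < v)
    (hf : ContDiff ℝ 1 f)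
    (hlip : ∀ a b, ‖gradient f a - gradient f b‖ ≤ L * ‖a - b‖)
    (hsc : ∀ a b, η * ‖a - b‖ ^ 2 ≤ (inner ℝ (gradient f a - gradient f b) (a - b) : ℝ))
    (hmin : ∀ z, f xstar ≤ f z)
    (hadaptedx : ∀ k, StronglyMeasurable[ℱ k] (x k))
    (hadaptedy : ∀ k, StronglyMeasurable[ℱ k] (y k))
    (hwint : ∀ k, Integrable (w k) μ)
    (hwsqint : ∀ k, Integrable (fun ω => ‖w k ω‖ ^ 2) μ)
    (hw0 : ∀ k, μ[w k | ℱ k] =ᵐ[μ] 0)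
    (hwvar : ∀ k, μ[fun ω => ‖w k ω‖ ^ 2 | ℱ k] ≤ᵐ[μ] fun _ => ν ^ 2 / N k)
    (hxint : ∀ k, Integrable (fun ω => ‖x k ω - xstar‖ ^ 2) μ)
    (hfyint : ∀ k, Integrable (fun ω => f (y k ω)) μ)
    (hα : 0 < α) (hα' : α ≤ 1 / L)
    (hγ : γ = Real.sqrt (α * η)) (hβ : β = (1 - γ) / (1 + γ))
    (hN : ∀ k, N k = ⌈((k : ℝ) + 1) ^ v⌉₊)
    (hrec1 : ∀ k ω, y (k + 1) ω = x k ω - α • (gradient f (x k ω) + w k ω))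
    (hrec2 : ∀ k ω, x (k + 1) ω = y (k + 1) ω + β • (y (k + 1) ω - y k ω)) :
    ∃ C : ℝ, 0 < C ∧ ∀ k, 1 ≤ k →
      (∫ ω, f (y k ω) ∂μ) - f xstar ≤ C * (k : ℝ) ^ (-v) := by
  have hL : 0 < L := hη.trans_le hηL
  have hαη : α * η = γ ^ 2 := by rw [hγ, sq_sqrt (by positivity)]
  have hγ0 : 0 < γ := by rw [hγ]; positivity
  have hαL : L * α ≤ 1 := by rwa [le_div_iff₀ hL, mul_comm] at hα'
  have hγ1 : γ ≤ 1 := by nlinarith [mul_le_mul_of_nonneg_left hηL hα.le]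
  have hgrad0 : gradient f xstar = 0 := by
    rw [gradient, (IsLocalMin.fderiv_eq_zero (.of_forall hmin)), map_zero]
  have hup := le_add_inner_gradient_add_of_lipschitz_gradient hf hlip
  have hlo := add_inner_gradient_add_le_of_strongly_monotone_gradient hf hsc
  have hqg (u) : η / 2 * ‖u - xstar‖ ^ 2 ≤ f u - f xstar := by
    have h := hlo xstar u
    rw [hgrad0, inner_zero_left, add_zero] at h
    linarith
  have hgrad (u) : ‖gradient f u‖ ≤ L * ‖u - xstar‖ := by simpa [hgrad0] using hlip u xstar
  have hx2 (k) : MemLp (fun ω => x k ω - xstar) 2 μ :=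
    (memLp_two_iff_integrable_sq_norm (((hadaptedx k).mono (ℱ.le k)).aestronglyMeasurable.sub
      aestronglyMeasurable_const)).2 (hxint k)
  set a := fun k => ∫ ω, AcceleratedSGD.lyapunov f xstar η γ (x k ω) (y k ω) ∂μ
  have hrec (k : ℕ) : a (k + 1) ≤ (1 - γ) * a k + α * ν ^ 2 * ((k : ℝ) + 1) ^ (-v) := by
    calc a (k + 1) ≤ (1 - γ) * a k + α * (ν ^ 2 / N k) :=
          AcceleratedSGD.integral_lyapunov_succ_le (ℱ.le k) hf.continuous_gradient hup hlo hqg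
            hgrad hη hα hαL hγ0 hγ1 hαη hβ (hadaptedx k) (hadaptedy k) (hx2 k) (hfyint k)
            (hx2 (k + 1)) ((hadaptedy (k + 1)).mono (ℱ.le _)).aestronglyMeasurable (hfyint (k + 1))
            ((memLp_two_iff_integrable_sq_norm (hwint k).1).2 (hwsqint k)) (hw0 k) (hwvar k)
            (hrec1 k) (hrec2 k)
      _ ≤ _ := by
        rw [mul_assoc, rpow_neg (by positivity), ← div_eq_mul_inv, hN k]
        gcongr
        exact Nat.le_ceil _
  obtain ⟨C, hC, haC⟩ := exists_le_mul_rpow_neg_of_le_contraction hγ0 hγ1 hrec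
  refine ⟨C, hC, fun k hk => ?_⟩
  have hk0 : (0 : ℝ) < k := by exact_mod_cast hk
  calc (∫ ω, f (y k ω) ∂μ) - f xstar = ∫ ω, (f (y k ω) - f xstar) ∂μ := by
        rw [integral_sub (hfyint k) (integrable_const _), integral_const, probReal_univ, one_smul]
    _ ≤ a k :=
        integral_mono ((hfyint k).sub (integrable_const _))
          (AcceleratedSGD.integrable_lyapunov hη hqg (hx2 k)
            ((hadaptedy k).mono (ℱ.le k)).aestronglyMeasurable (hfyint k))
          fun ω => AcceleratedSGD.sub_le_lyapunov hη.le γ (x k ω) (y k ω)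
    _ ≤ C * ((k : ℝ) + 1) ^ (-v) := haC k
    _ ≤ C * (k : ℝ) ^ (-v) :=
        mul_le_mul_of_nonneg_left (rpow_le_rpow_of_nonpos hk0 (by linarith) (by linarith)) hC.le

/-- **Proposition 5 (polynomial rate for variance-reduced accelerated SGD).** -/
theorem stmt_13
    {m : ℕ} {Ω : Type*} {m0 : MeasurableSpace Ω} {μ : Measure Ω}
    [IsProbabilityMeasure μ] (ℱ : Filtration ℕ m0)
    (f : EuclideanSpace ℝ (Fin m) → ℝ) (xstar : EuclideanSpace ℝ (Fin m))
    (x y w : ℕ → Ω → EuclideanSpace ℝ (Fin m)) (N : ℕ → ℕ)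
    (η L ν α β γ v : ℝ)
    (hη : 0 < η) (hηL : η ≤ L) (hν : 0 < ν) (hv : 0 < v)
    (hf : ContDiff ℝ 1 f)
    (hlip : ∀ a b, ‖gradient f a - gradient f b‖ ≤ L * ‖a - b‖)
    (hsc : ∀ a b, η * ‖a - b‖ ^ 2 ≤ (inner ℝ (gradient f a - gradient f b) (a - b) : ℝ))
    (hmin : ∀ z, f xstar ≤ f z)
    (hadaptedx : ∀ k, StronglyMeasurable[ℱ k] (x k))
    (hadaptedy : ∀ k, StronglyMeasurable[ℱ k] (y k))
    (hwint : ∀ k, Integrable (w k) μ)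
    (hwsqint : ∀ k, Integrable (fun ω => ‖w k ω‖ ^ 2) μ)
    (hw0 : ∀ k, μ[w k | ℱ k] =ᵐ[μ] 0)
    (hwvar : ∀ k, μ[fun ω => ‖w k ω‖ ^ 2 | ℱ k] ≤ᵐ[μ] fun _ => ν ^ 2 / N k)
    (hxint : ∀ k, Integrable (fun ω => ‖x k ω - xstar‖ ^ 2) μ)
    (hfyint : ∀ k, Integrable (fun ω => f (y k ω)) μ)
    (hα : 0 < α) (hα' : α ≤ 1 / L)
    (hγ : γ = Real.sqrt (α * η)) (hβ : β = (1 - γ) / (1 + γ))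
    (hN : ∀ k, N k = ⌈((k : ℝ) + 1) ^ v⌉₊)
    (hinit : x 0 = y 0)
    (hrec1 : ∀ k ω, y (k + 1) ω = x k ω - α • (gradient f (x k ω) + w k ω))
    (hrec2 : ∀ k ω, x (k + 1) ω = y (k + 1) ω + β • (y (k + 1) ω - y k ω)) :
    ∃ C : ℝ, 0 < C ∧ ∀ k, 1 ≤ k →
      (∫ ω, f (y k ω) ∂μ) - f xstar ≤ C * (k : ℝ) ^ (-v) :=
  stmt_13_general ℱ f xstar x y w N η L ν α β γ v hη hηL hv hf hlip hsc hmin hadaptedx hadaptedy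
    hwint hwsqint hw0 hwvar hxint hfyint hα hα' hγ hβ hN hrec1 hrec2
end
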